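/- arXiv:2110.07386 — 5 statements merged into one kernel-verified Lean document; each statement's English description precedes it below -/
import Mathlib

section
/- Let p be a prime and k ≥ 1. Let W, X, Y, Z be cofinitely generated (over ℤ_p) abelian groups together with group homomorphisms W → X → Y → Z such that the sequence is exact at X and at Y. Then |r_p^k(X) − r_p^k(Y)| ≤ r_p^k(W) + r_p^k(Z); equivalently, |X[p^k]| ≤ |Y[p^k]|·|W[p^k]|·|Z[p^k]| and |Y[p^k]| ≤ |X[p^k]|·|W[p^k]|·|Z[p^k]|. -/
lemma finite_torsionBy_pow (p : ℕ) {N : Type*} [AddCommGroup N]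
    (hfin : Finite (Submodule.torsionBy ℤ N (p : ℤ))) (k : ℕ) :
    Finite (Submodule.torsionBy ℤ N ((p : ℤ) ^ k)) := by
  induction k with
  | zero =>
    have : Subsingleton (Submodule.torsionBy ℤ N ((p : ℤ) ^ 0)) := by
      constructor
      rintro ⟨x, hx⟩ ⟨y, hy⟩
      rw [Submodule.mem_torsionBy_iff, pow_zero, one_smul] at hx hy
      simp [hx, hy]
    exact Finite.of_subsingleton
  | succ k ih =>
    set G := Submodule.torsionBy ℤ N ((p : ℤ) ^ (k + 1)) with hG
    have hmem : ∀ x : G, (p : ℤ) • ((p : ℤ) ^ k • (x : N)) = 0 := by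
      rintro ⟨x, hx⟩
      rw [Submodule.mem_torsionBy_iff] at hx
      rw [smul_smul, ← pow_succ']
      exact hx
    let ψ : G →+ Submodule.torsionBy ℤ N (p : ℤ) :=
      { toFun := fun x => ⟨(p : ℤ) ^ k • (x : N),
          (Submodule.mem_torsionBy_iff _ _).mpr (hmem x)⟩
        map_zero' := by ext; simp
        map_add' := by intro a b; ext; simp [smul_add] }
    have hkerfin : Finite ψ.ker := by
      have : ∀ x : ψ.ker, ((x : G) : N) ∈ Submodule.torsionBy ℤ N ((p : ℤ) ^ k) := by
        rintro ⟨x, hx⟩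
        rw [AddMonoidHom.mem_ker] at hx
        have : (p : ℤ) ^ k • ((x : G) : N) = 0 := congrArg Subtype.val hx
        exact (Submodule.mem_torsionBy_iff _ _).mpr this
      exact Finite.of_injective
        (fun x : ψ.ker => (⟨((x : G) : N), this x⟩ : Submodule.torsionBy ℤ N ((p : ℤ) ^ k)))
        (by rintro ⟨⟨x, hx⟩, hx'⟩ ⟨⟨y, hy⟩, hy'⟩ hxy; simpa using congrArg Subtype.val hxy)
    have hquotfin : Finite (G ⧸ ψ.ker) :=
      Finite.of_equiv _ (QuotientAddGroup.quotientKerEquivRange ψ).symm.toEquiv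
    exact Finite.of_equiv _ (AddSubgroup.addGroupEquivQuotientProdAddSubgroup (s := ψ.ker)).symm


-- counting lemma for finite groups: card G = card ker * card range
lemma card_eq_ker_mul_range {G H : Type*} [AddCommGroup G] [AddCommGroup H] [Finite G]
    (φ : G →+ H) : Nat.card G = Nat.card φ.ker * Nat.card φ.range := by
  have h1 := AddSubgroup.card_eq_card_quotient_mul_card_addSubgroup (φ.ker)
  have h2 : Nat.card (G ⧸ φ.ker) = Nat.card φ.range :=
    Nat.card_congr (QuotientAddGroup.quotientKerEquivRange φ).toEquiv
  rw [h1, h2, Nat.mul_comm]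

-- Lemma C
lemma card_range_inter_torsion_le (p k : ℕ) (hp : p.Prime)
    {A B : Type*} [AddCommGroup A] [AddCommGroup B] (φ : A →+ B)
    (hA : ∀ a : A, ∃ n : ℕ, ((p : ℤ) ^ n) • a = 0)
    (hAfin : Finite (Submodule.torsionBy ℤ A ((p : ℤ) ^ k)))
    (hBfin : Finite (Submodule.torsionBy ℤ B ((p : ℤ) ^ k))) :
    Nat.card {b : B // ((p : ℤ) ^ k) • b = 0 ∧ b ∈ Set.range φ} ≤
      Nat.card (Submodule.torsionBy ℤ A ((p : ℤ) ^ k)) := by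
  classical
  set S := {b : B // ((p : ℤ) ^ k) • b = 0 ∧ b ∈ Set.range φ} with hS
  haveI : Finite S := by
    apply Finite.of_injective
      (fun s : S => (⟨s.1, (Submodule.mem_torsionBy_iff _ _).mpr s.2.1⟩ :
        Submodule.torsionBy ℤ B ((p : ℤ) ^ k)))
    rintro ⟨x, hx⟩ ⟨y, hy⟩ hxy
    exact Subtype.ext (by simpa using congrArg Subtype.val hxy)
  -- choose preimages
  have hex : ∀ s : S, ∃ a : A, φ a = s.1 := fun s => s.2.2
  choose w hw using hex
  -- finite subgroup F of A
  set F : AddSubgroup A := AddSubgroup.closure (Set.range w) with hF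
  haveI : AddGroup.FG F := AddGroup.closure_finite_fg (Set.range w)
  have htor : AddMonoid.IsTorsion F := by
    rintro ⟨a, ha⟩
    obtain ⟨n, hn⟩ := hA a
    rw [isOfFinAddOrder_iff_nsmul_eq_zero]
    refine ⟨p ^ n, pow_pos hp.pos n, ?_⟩
    ext
    push_cast
    have : ((p : ℤ) ^ n) • a = ((p ^ n : ℕ) : ℤ) • a := by push_cast; ring_nf
    simpa using (natCast_zsmul a (p ^ n) ▸ (this ▸ hn))
  haveI hFfin : Finite F := AddCommGroup.finite_of_fg_torsion F htor
  -- F' = F ∩ φ⁻¹(B[p^k])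
  set Tb : AddSubgroup B := (Submodule.torsionBy ℤ B ((p : ℤ) ^ k)).toAddSubgroup with hTb
  set F' : AddSubgroup A := F ⊓ Tb.comap φ with hF'
  haveI : Finite F' :=
    Finite.of_injective (AddSubgroup.inclusion (inf_le_left : F' ≤ F))
      (AddSubgroup.inclusion_injective _)
  set ψ : F' →+ B := φ.comp F'.subtype with hψ
  haveI : Finite ψ.range :=
    Finite.of_surjective ψ.rangeRestrict ψ.rangeRestrict_surjective
  -- step 1 : card S ≤ card range ψ
  have step1 : Nat.card S ≤ Nat.card ψ.range := by
    apply Nat.card_le_card_of_injective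
      (fun s : S => (⟨s.1, ⟨⟨w s, AddSubgroup.mem_inf.mpr
        ⟨AddSubgroup.subset_closure ⟨s, rfl⟩,
         by simpa [Tb, Submodule.mem_torsionBy_iff, hw s] using s.2.1⟩⟩, hw s⟩⟩ : ψ.range))
    rintro ⟨x, hx⟩ ⟨y, hy⟩ hxy
    exact Subtype.ext (by simpa using congrArg Subtype.val hxy)
  -- multiplication-by-p^k endomorphism of F'
  set μ : F' →+ F' :=
    { toFun := fun x => ((p : ℤ) ^ k) • x
      map_zero' := smul_zero _
      map_add' := fun a b => smul_add _ a b } with hμ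
  have hsub : μ.range ≤ ψ.ker := by
    rintro x ⟨a, rfl⟩
    have haT : φ a ∈ Tb := (AddSubgroup.mem_inf.mp a.2).2
    have : ((p : ℤ) ^ k) • φ (a : A) = 0 := by
      simpa [Tb, Submodule.mem_torsionBy_iff] using haT
    simp only [AddMonoidHom.mem_ker, hψ, AddMonoidHom.coe_comp, Function.comp_apply]
    show φ ((μ a : F') : A) = 0
    have hcoe : ((μ a : F') : A) = ((p : ℤ) ^ k) • (a : A) := rfl
    rw [hcoe, map_zsmul]
    exact this
  -- step 2 : card range ψ = card (F' ⧸ ψ.ker) ≤ card (F' ⧸ μ.range)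
  have step2 : Nat.card ψ.range ≤ Nat.card (F' ⧸ μ.range) := by
    have he : Nat.card ψ.range = Nat.card (F' ⧸ ψ.ker) :=
      Nat.card_congr (QuotientAddGroup.quotientKerEquivRange ψ).symm.toEquiv
    rw [he]
    refine Nat.card_le_card_of_surjective
      (QuotientAddGroup.map μ.range ψ.ker (AddMonoidHom.id _) (by simpa using hsub)) ?_
    rintro ⟨x⟩
    exact ⟨QuotientAddGroup.mk x, rfl⟩
  -- step 3 : card (F' ⧸ μ.range) = card μ.ker
  have step3 : Nat.card (F' ⧸ μ.range) = Nat.card μ.ker := by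
    have h1 := AddSubgroup.card_eq_card_quotient_mul_card_addSubgroup (μ.range)
    have h2 := card_eq_ker_mul_range μ
    have hpos : 0 < Nat.card μ.range := Nat.card_pos
    have : Nat.card (F' ⧸ μ.range) * Nat.card μ.range
        = Nat.card μ.ker * Nat.card μ.range := by rw [← h1, h2]
    exact Nat.eq_of_mul_eq_mul_right hpos this
  -- step 4 : card μ.ker ≤ card A[p^k]
  have step4 : Nat.card μ.ker ≤ Nat.card (Submodule.torsionBy ℤ A ((p : ℤ) ^ k)) := by
    apply Nat.card_le_card_of_injective
      (fun x : μ.ker => (⟨((x : F') : A), by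
        have hx : μ (x : F') = 0 := x.2
        have h2 : ((μ (x : F') : F') : A) = (0 : A) := by
          rw [hx]; rfl
        have : ((p : ℤ) ^ k) • ((x : F') : A) = 0 := h2
        exact (Submodule.mem_torsionBy_iff _ _).mpr this⟩ :
          Submodule.torsionBy ℤ A ((p : ℤ) ^ k)))
    rintro ⟨⟨x, hx⟩, hx'⟩ ⟨⟨y, hy⟩, hy'⟩ hxy
    simpa using congrArg Subtype.val hxy
  calc Nat.card S ≤ Nat.card ψ.range := step1
    _ ≤ Nat.card (F' ⧸ μ.range) := step2
    _ = Nat.card μ.ker := step3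
    _ ≤ _ := step4


/-- An abelian group is *cofinitely generated over `ℤ_p`* if it is `p`-primary torsion
and its `p`-torsion subgroup is finite. -/
def CofinitelyGenerated (p : ℕ) (N : Type*) [AddCommGroup N] : Prop :=
  (∀ x : N, ∃ n : ℕ, ((p : ℤ) ^ n) • x = 0) ∧
    Finite (Submodule.torsionBy ℤ N (p : ℤ))


-- the generic "one step" lemma: exact at B for A →+ B →+ C with D mapping in from the left
lemma step_card_le (p k : ℕ) (hp : p.Prime)
    {U V O : Type*} [AddCommGroup U] [AddCommGroup V] [AddCommGroup O]
    (hU : CofinitelyGenerated p U) (hV : CofinitelyGenerated p V)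
    (hO : CofinitelyGenerated p O)
    (f : U →+ V) (g : V →+ O) (hfg : Function.Exact ⇑f ⇑g) :
    Nat.card (Submodule.torsionBy ℤ V ((p : ℤ) ^ k)) ≤
      Nat.card (Submodule.torsionBy ℤ U ((p : ℤ) ^ k)) *
        Nat.card (Submodule.torsionBy ℤ O ((p : ℤ) ^ k)) := by
  haveI hUf := finite_torsionBy_pow p hU.2 k
  haveI hVf := finite_torsionBy_pow p hV.2 k
  haveI hOf := finite_torsionBy_pow p hO.2 k
  -- induced map on torsion
  set g' : (Submodule.torsionBy ℤ V ((p : ℤ) ^ k)) →+ (Submodule.torsionBy ℤ O ((p : ℤ) ^ k)) :=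
    { toFun := fun x => ⟨g (x : V), by
        rw [Submodule.mem_torsionBy_iff, ← map_zsmul]
        have hx : ((p : ℤ) ^ k) • (x : V) = 0 := (Submodule.mem_torsionBy_iff _ _).mp x.2
        rw [hx, map_zero]⟩
      map_zero' := by ext; simp
      map_add' := by intro a b; ext; simp } with hg'
  have hcard := card_eq_ker_mul_range g'
  -- ker g' ≃ the subtype from lemma C
  have hker : Nat.card g'.ker
      = Nat.card {v : V // ((p : ℤ) ^ k) • v = 0 ∧ v ∈ Set.range f} := by
    apply Nat.card_congr
    refine ⟨fun x => ⟨((x : _) : V), (Submodule.mem_torsionBy_iff _ _).mp (x : Submodule.torsionBy ℤ V ((p : ℤ) ^ k)).2, ?_⟩,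
      fun s => ⟨⟨s.1, (Submodule.mem_torsionBy_iff _ _).mpr s.2.1⟩, ?_⟩, ?_, ?_⟩
    · have hx : g' (x : _) = 0 := x.2
      have : g ((x : _) : V) = 0 := congrArg Subtype.val hx
      exact (hfg _).mp this
    · have : g s.1 = 0 := (hfg _).mpr s.2.2
      exact Subtype.ext (by simpa [hg'] using this)
    · rintro ⟨⟨x, hx⟩, hx'⟩; rfl
    · rintro ⟨s, hs⟩; rfl
  have h1 : Nat.card g'.ker ≤ Nat.card (Submodule.torsionBy ℤ U ((p : ℤ) ^ k)) := by
    rw [hker]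
    exact card_range_inter_torsion_le p k hp f hU.1
      (finite_torsionBy_pow p hU.2 k) (finite_torsionBy_pow p hV.2 k)
  have h2 : Nat.card g'.range ≤ Nat.card (Submodule.torsionBy ℤ O ((p : ℤ) ^ k)) :=
    Nat.card_le_card_of_injective (Subtype.val) Subtype.coe_injective
  calc Nat.card (Submodule.torsionBy ℤ V ((p : ℤ) ^ k))
      = Nat.card g'.ker * Nat.card g'.range := hcard
    _ ≤ _ := Nat.mul_le_mul h1 h2

theorem card_pk_torsion_le_of_exact
    (p k : ℕ) (hp : p.Prime) (hk : 1 ≤ k)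
    {W X Y Z : Type*} [AddCommGroup W] [AddCommGroup X] [AddCommGroup Y] [AddCommGroup Z]
    (hW : CofinitelyGenerated p W) (hX : CofinitelyGenerated p X)
    (hY : CofinitelyGenerated p Y) (hZ : CofinitelyGenerated p Z)
    (f : W →+ X) (g : X →+ Y) (h : Y →+ Z)
    (hfg : Function.Exact ⇑f ⇑g) (hgh : Function.Exact ⇑g ⇑h) :
    Nat.card (Submodule.torsionBy ℤ X ((p : ℤ) ^ k)) ≤
        Nat.card (Submodule.torsionBy ℤ Y ((p : ℤ) ^ k)) *
          Nat.card (Submodule.torsionBy ℤ W ((p : ℤ) ^ k)) *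
          Nat.card (Submodule.torsionBy ℤ Z ((p : ℤ) ^ k)) ∧
      Nat.card (Submodule.torsionBy ℤ Y ((p : ℤ) ^ k)) ≤
        Nat.card (Submodule.torsionBy ℤ X ((p : ℤ) ^ k)) *
          Nat.card (Submodule.torsionBy ℤ W ((p : ℤ) ^ k)) *
          Nat.card (Submodule.torsionBy ℤ Z ((p : ℤ) ^ k)) := by
  haveI hWf := finite_torsionBy_pow p hW.2 k
  haveI hXf := finite_torsionBy_pow p hX.2 k
  haveI hYf := finite_torsionBy_pow p hY.2 k
  haveI hZf := finite_torsionBy_pow p hZ.2 k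
  have hZpos : 1 ≤ Nat.card (Submodule.torsionBy ℤ Z ((p : ℤ) ^ k)) := Nat.card_pos
  have hWpos : 1 ≤ Nat.card (Submodule.torsionBy ℤ W ((p : ℤ) ^ k)) := Nat.card_pos
  constructor
  · have := step_card_le p k hp hW hX hY f g hfg
    calc Nat.card (Submodule.torsionBy ℤ X ((p : ℤ) ^ k))
        ≤ Nat.card (Submodule.torsionBy ℤ W ((p : ℤ) ^ k)) *
            Nat.card (Submodule.torsionBy ℤ Y ((p : ℤ) ^ k)) := this
      _ = Nat.card (Submodule.torsionBy ℤ Y ((p : ℤ) ^ k)) *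
            Nat.card (Submodule.torsionBy ℤ W ((p : ℤ) ^ k)) * 1 := by ring
      _ ≤ _ := Nat.mul_le_mul_left _ hZpos
  · have := step_card_le p k hp hX hY hZ g h hgh
    calc Nat.card (Submodule.torsionBy ℤ Y ((p : ℤ) ^ k))
        ≤ Nat.card (Submodule.torsionBy ℤ X ((p : ℤ) ^ k)) *
            Nat.card (Submodule.torsionBy ℤ Z ((p : ℤ) ^ k)) := this
      _ = Nat.card (Submodule.torsionBy ℤ X ((p : ℤ) ^ k)) * 1 *
            Nat.card (Submodule.torsionBy ℤ Z ((p : ℤ) ^ k)) := by ring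
      _ ≤ _ := by
          apply Nat.mul_le_mul_right
          exact Nat.mul_le_mul_left _ hWpos
end

section
/- Let p be a prime, k ≥ 1, G a group, and M an abelian group equipped with an action of G by automorphisms (a G-module) such that M is cofinitely generated over ℤ_p. Write M^G for the subgroup of G-invariants and M/M^G for the quotient G-module. Assume that H^1(G, ℤ/p^kℤ) (cohomology with trivial action) is finite of order p^{h_k(G)}, and that the p^k-torsion subgroups of H^1(G, M) and of (M/M^G)^G are finite. Then h_k(G)·r_p(p^{k−1}·M^G) − r_p^k((M/M^G)^G) ≤ r_p^k(H^1(G, M)); equivalently |H^1(G, ℤ/p^kℤ)|^{r_p(p^{k−1}M^G)} ≤ |H^1(G,M)[p^k]| · |((M/M^G)^G)[p^k]|. -/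
/-- The `p`-rank `r_p(N)`: the exponent `r` with `|N[p]| = p^r`. -/
noncomputable def rp (p : ℕ) (N : Type*) [AddCommGroup N] : ℕ :=
  (Nat.card (Submodule.torsionBy ℤ N (p : ℤ))).factorization p

/-- The image `p^m · M` of multiplication by `p^m` on `M`. -/
noncomputable def pPowMul (p m : ℕ) (M : Type*) [AddCommGroup M] : Submodule ℤ M :=
  LinearMap.range (((p : ℤ) ^ m) • (LinearMap.id : M →ₗ[ℤ] M))

section GroupCohomology

variable {G : Type*} [Group G] {M : Type*} [AddCommGroup M]

/-- The subgroup of `G`-invariants of a `G`-module `M` (action given by `ρ`). -/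
def invariants (ρ : G →* Multiplicative (AddAut M)) : AddSubgroup M where
  carrier := {x | ∀ g : G, (ρ g).toAdd x = x}
  zero_mem' := by intro g; simp
  add_mem' := by intro a b ha hb g; simp [map_add, ha g, hb g]
  neg_mem' := by intro a ha g; simp [ha g]

/-- The group of 1-cocycles of `G` with values in the `G`-module `M`. -/
def oneCocycles (ρ : G →* Multiplicative (AddAut M)) : AddSubgroup (G → M) where
  carrier := {f | ∀ g h : G, f (g * h) = f g + (ρ g).toAdd (f h)}
  zero_mem' := by intro g h; simp
  add_mem' := by
    intro a b ha hb g h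
    simp only [Pi.add_apply, ha g h, hb g h, map_add]
    abel
  neg_mem' := by
    intro a ha g h
    simp only [Pi.neg_apply, ha g h, map_neg]
    abel

/-- The group of 1-coboundaries, as a subgroup of the 1-cocycles. -/
def oneCoboundaries (ρ : G →* Multiplicative (AddAut M)) : AddSubgroup (oneCocycles ρ) where
  carrier := {f | ∃ m : M, ∀ g : G, (f : G → M) g = (ρ g).toAdd m - m}
  zero_mem' := ⟨0, by intro g; simp⟩
  add_mem' := by
    rintro a b ⟨m, hm⟩ ⟨m', hm'⟩
    refine ⟨m + m', fun g => ?_⟩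
    have : ((a + b : oneCocycles ρ) : G → M) g = (a : G → M) g + (b : G → M) g := rfl
    rw [this, hm g, hm' g, map_add]
    abel
  neg_mem' := by
    rintro a ⟨m, hm⟩
    refine ⟨-m, fun g => ?_⟩
    have : ((-a : oneCocycles ρ) : G → M) g = -((a : G → M) g) := rfl
    rw [this, hm g, map_neg]
    abel

/-- The first group cohomology `H¹(G, M)` of the `G`-module `M`. -/
abbrev H1 (ρ : G →* Multiplicative (AddAut M)) := oneCocycles ρ ⧸ oneCoboundaries ρ

end GroupCohomology

/-! Choose `a₁, …, a_r ∈ M^G` such that the `p^(k-1) aᵢ` form an `𝔽_p`-basis of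
`(p^(k-1) M^G)[p]`; then `c ↦ ∑ cᵢ aᵢ` embeds `(ℤ/p^k)^r` into `M^G`. As `G` acts trivially on
`ℤ/p^k`, `H¹(G, ℤ/p^k)^r` consists of homomorphisms `G → (ℤ/p^k)^r`, and composing with the
embedding gives `M^G`-valued cocycles, whose classes lie in `H¹(G, M)[p^k]`. A cocycle in the kernel
is `g ↦ g m - m`, and `m ↦ π m` (the connecting map of `0 → M^G → M → M/M^G → 0`) sends the kernel
injectively into `(M/M^G)^G[p^k]`. -/

open Submodule in
theorem finite_torsionBy_of_injective {N M : Type*} [AddCommGroup N] [AddCommGroup M]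
    {f : N →+ M} (hf : Function.Injective f) (q : ℤ) [Finite (torsionBy ℤ M q)] :
    Finite (torsionBy ℤ N q) :=
  Finite.of_injective
    (fun x : torsionBy ℤ N q => (⟨f x, by
      rw [mem_torsionBy_iff, ← map_zsmul, (mem_torsionBy_iff _ _).mp x.2, map_zero]⟩ :
        torsionBy ℤ M q))
    fun _ _ h => Subtype.ext (hf (congrArg Subtype.val h))

theorem exists_linearIndependent_fin_factorization_card {p : ℕ} [Fact p.Prime] {V : Type*}
    [AddCommGroup V] [Module (ZMod p) V] [Finite V] :
    ∃ b : Fin ((Nat.card V).factorization p) → V, LinearIndependent (ZMod p) b := by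
  have hdim : Module.finrank (ZMod p) V = (Nat.card V).factorization p := by
    rw [Module.natCard_eq_pow_finrank (K := ZMod p), Nat.card_zmod,
      Nat.Prime.factorization_pow Fact.out, Finsupp.single_eq_same]
  exact ⟨_, (Module.finBasisOfFinrankEq (ZMod p) V hdim).linearIndependent⟩

theorem exists_family_prime_dvd_of_sum_zsmul_eq_zero {p : ℕ} (hp : p.Prime) {V : Type*}
    [AddCommGroup V] [Finite V] (hV : ∀ x : V, p • x = 0) :
    ∃ b : Fin ((Nat.card V).factorization p) → V,
      ∀ d : Fin ((Nat.card V).factorization p) → ℤ, ∑ i, d i • b i = 0 → ∀ i, (p : ℤ) ∣ d i := by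
  have : Fact p.Prime := ⟨hp⟩
  let _ : Module (ZMod p) V := AddCommGroup.zmodModule hV
  obtain ⟨b, hb⟩ := exists_linearIndependent_fin_factorization_card (p := p) (V := V)
  refine ⟨b, fun d hd i => (ZMod.intCast_zmod_eq_zero_iff_dvd _ _).mp ?_⟩
  refine Fintype.linearIndependent_iff.mp hb (fun i => (d i : ZMod p)) ?_ i
  simpa only [Int.cast_smul_eq_zsmul] using hd

theorem pow_dvd_of_sum_zsmul_eq_zero {N ι : Type*} [AddCommGroup N] [Fintype ι] {p : ℤ} {k : ℕ}
    {a : ι → N} (ha : ∀ d : ι → ℤ, ∑ i, d i • p ^ (k - 1) • a i = 0 → ∀ i, p ∣ d i)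
    {e : ι → ℤ} (he : ∑ i, e i • a i = 0) (i : ι) : p ^ k ∣ e i := by
  -- If `p^j ∣ eᵢ` for all `i` and `j < k`, multiplying the relation by `p^(k-1-j)` gives a
  -- relation among the `p^(k-1) aᵢ` with coefficients `eᵢ / p^j`.
  suffices ∀ j ≤ k, ∀ i, p ^ j ∣ e i from this k le_rfl i
  intro j
  induction j with
  | zero => simp
  | succ j ih =>
    intro hj
    choose d hd using ih (by omega)
    have hsum : ∑ i, d i • p ^ (k - 1) • a i = 0 := by
      have := congrArg (p ^ (k - 1 - j) • ·) he
      simp only [smul_zero, Finset.smul_sum, smul_smul, hd] at this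
      rw [← this]
      refine Finset.sum_congr rfl fun i _ => ?_
      rw [smul_smul, ← mul_assoc, ← pow_add, Nat.sub_add_cancel (by omega), mul_comm]
    intro i
    obtain ⟨t, ht⟩ := ha d hsum i
    exact ⟨t, by rw [hd i, ht, pow_succ, mul_assoc]⟩

def piZModLift {ι N : Type*} [Fintype ι] [AddCommGroup N] (n : ℕ) (a : ι → N)
    (ha : ∀ i, (n : ℤ) • a i = 0) : (ι → ZMod n) →+ N :=
  ∑ i, (ZMod.lift n ⟨zmultiplesHom N (a i), (zmultiplesHom_apply ..).trans (ha i)⟩).comp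
    (Pi.evalAddMonoidHom _ i)

theorem piZModLift_apply {ι N : Type*} [Fintype ι] [AddCommGroup N] (n : ℕ) (a : ι → N)
    (ha : ∀ i, (n : ℤ) • a i = 0) (c : ι → ZMod n) :
    piZModLift n a ha c = ∑ i, ((c i).cast : ℤ) • a i := by
  simp only [piZModLift, AddMonoidHom.finsetSum_apply]
  refine Finset.sum_congr rfl fun i _ => ?_
  rw [AddMonoidHom.comp_apply, Pi.evalAddMonoidHom_apply, ← ZMod.intCast_zmod_cast (c i),
    ZMod.lift_coe, ZMod.intCast_zmod_cast, zmultiplesHom_apply]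

theorem piZModLift_injective {ι N : Type*} [Fintype ι] [AddCommGroup N] {p k : ℕ} {a : ι → N}
    (ha : ∀ i, ((p ^ k : ℕ) : ℤ) • a i = 0)
    (hindep : ∀ d : ι → ℤ, ∑ i, d i • (p : ℤ) ^ (k - 1) • a i = 0 → ∀ i, (p : ℤ) ∣ d i) :
    Function.Injective (piZModLift (p ^ k) a ha) := by
  refine (injective_iff_map_eq_zero _).mpr fun c hc => funext fun i => ?_
  rw [piZModLift_apply] at hc
  have := pow_dvd_of_sum_zsmul_eq_zero hindep hc i
  rw [Pi.zero_apply, ← ZMod.intCast_zmod_cast (c i), ZMod.intCast_zmod_eq_zero_iff_dvd]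
  exact_mod_cast this

open Submodule in
theorem exists_injective_pi_zmod_prime_pow {p k : ℕ} (hp : p.Prime) (hk : 1 ≤ k) {N : Type*}
    [AddCommGroup N] [Finite (torsionBy ℤ N p)] :
    ∃ ι : (Fin (rp p (pPowMul p (k - 1) N)) → ZMod (p ^ k)) →+ N, Function.Injective ι := by
  set P := pPowMul p (k - 1) N
  have : Finite (torsionBy ℤ P p) :=
    finite_torsionBy_of_injective (f := P.subtype.toAddMonoidHom) P.injective_subtype _
  obtain ⟨b, hb⟩ : ∃ b : Fin (rp p P) → torsionBy ℤ P p,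
      ∀ d : Fin (rp p P) → ℤ, ∑ i, d i • b i = 0 → ∀ i, (p : ℤ) ∣ d i :=
    exists_family_prime_dvd_of_sum_zsmul_eq_zero hp fun x => by
      rw [← natCast_zsmul]; exact Subtype.ext ((mem_torsionBy_iff _ _).mp x.2)
  choose a ha using fun i => (b i : P).2
  simp only [LinearMap.smul_apply, LinearMap.id_apply] at ha
  have hator : ∀ i, ((p ^ k : ℕ) : ℤ) • a i = 0 := fun i => by
    have hpb : (p : ℤ) • ((b i : P) : N) = 0 :=
      congrArg Subtype.val ((mem_torsionBy_iff _ _).mp (b i).2)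
    rw [← ha i, smul_smul, ← pow_succ', Nat.sub_add_cancel hk] at hpb
    exact_mod_cast hpb
  refine ⟨_, piZModLift_injective hator fun d hd => hb d ?_⟩
  apply P.injective_subtype.comp (torsionBy ℤ P p).injective_subtype
  simp only [Function.comp_apply, map_sum, map_zsmul, map_zero, Submodule.subtype_apply]
  simpa only [← ha] using hd

theorem card_le_card_mul_card_ker {Z T : Type*} [AddGroup Z] [AddGroup T] (Φ : Z →+ T)
    {S : AddSubgroup T} [Finite S] (hS : Φ.range ≤ S) :
    Nat.card Z ≤ Nat.card S * Nat.card Φ.ker := by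
  rw [AddSubgroup.card_eq_card_quotient_mul_card_addSubgroup Φ.ker,
    Nat.card_congr (QuotientAddGroup.quotientKerEquivRange Φ).toEquiv]
  exact Nat.mul_le_mul_right _ (AddSubgroup.card_le_of_le hS)

section GroupCohomology

variable {G : Type*} [Group G]

theorem oneCoboundaries_one (A : Type*) [AddCommGroup A] :
    oneCoboundaries (1 : G →* Multiplicative (AddAut A)) = ⊥ := by
  refine (AddSubgroup.eq_bot_iff_forall _).mpr fun f ⟨m, hm⟩ => Subtype.ext <| funext fun g => ?_
  simpa using hm g

theorem card_H1_one (A : Type*) [AddCommGroup A] :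
    Nat.card (H1 (1 : G →* Multiplicative (AddAut A))) =
      Nat.card (oneCocycles (1 : G →* Multiplicative (AddAut A))) :=
  Nat.card_congr ((QuotientAddGroup.quotientAddEquivOfEq (oneCoboundaries_one A)).trans
    QuotientAddGroup.quotientBot).toEquiv

variable {M : Type*} [AddCommGroup M]

def oneCocyclesPiMap {ι A : Type*} [AddCommGroup A] (ρ : G →* Multiplicative (AddAut M))
    (φ : (ι → A) →+ M) (hφ : ∀ a, φ a ∈ invariants ρ) :
    (ι → oneCocycles (1 : G →* Multiplicative (AddAut A))) →+ oneCocycles ρ where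
  toFun f := ⟨fun g => φ fun i => (f i : G → A) g, fun g h => by
    have hf : (fun i => (f i : G → A) (g * h)) =
        (fun i => (f i : G → A) g) + fun i => (f i : G → A) h :=
      funext fun i => by simpa using (f i).2 g h
    beta_reduce
    rw [hf, map_add, hφ _ g]⟩
  map_zero' := Subtype.ext <| funext fun _ => map_zero φ
  map_add' f f' := Subtype.ext <| funext fun g => map_add φ _ _

theorem oneCocyclesPiMap_injective {ι A : Type*} [AddCommGroup A]
    (ρ : G →* Multiplicative (AddAut M)) {φ : (ι → A) →+ M} (hφ : ∀ a, φ a ∈ invariants ρ)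
    (hφinj : Function.Injective φ) : Function.Injective (oneCocyclesPiMap ρ φ hφ) :=
  fun f f' h => funext fun i => Subtype.ext <| funext fun g =>
    congrFun (hφinj (congrFun (congrArg Subtype.val h) g) :
      (fun i => (f i : G → A) g) = fun i => (f' i : G → A) g) i

variable {Q : Type*} [AddCommGroup Q]
  {ρM : G →* Multiplicative (AddAut M)} {ρQ : G →* Multiplicative (AddAut Q)} {π : M →+ Q}

theorem map_mem_invariants_of_sub_mem_invariants
    (hπequiv : ∀ (g : G) (x : M), π ((ρM g).toAdd x) = (ρQ g).toAdd (π x))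
    (hπker : π.ker = invariants ρM) {m : M} (hm : ∀ g, (ρM g).toAdd m - m ∈ invariants ρM) :
    π m ∈ invariants ρQ := fun g => by
  rw [← hπequiv, ← sub_eq_zero, ← map_sub, ← AddMonoidHom.mem_ker, hπker]
  exact hm g

theorem zsmul_map_eq_zero_of_zsmul_sub_eq_zero (hπker : π.ker = invariants ρM) {n : ℤ} {m : M}
    (hm : ∀ g, n • ((ρM g).toAdd m - m) = 0) : n • π m = 0 := by
  rw [← map_zsmul, ← AddMonoidHom.mem_ker, hπker]
  intro g
  rw [map_zsmul, ← sub_eq_zero, ← smul_sub, hm g]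

theorem card_ker_le_card_torsionBy_invariants
    (hπequiv : ∀ (g : G) (x : M), π ((ρM g).toAdd x) = (ρQ g).toAdd (π x))
    (hπker : π.ker = invariants ρM) {Z : Type*} [AddCommGroup Z] {c : Z →+ oneCocycles ρM}
    (hc : Function.Injective c) (hcinv : ∀ z g, (c z : G → M) g ∈ invariants ρM)
    {n : ℤ} (hn : ∀ z : Z, n • z = 0) [Finite (Submodule.torsionBy ℤ (invariants ρQ) n)] :
    Nat.card ((QuotientAddGroup.mk' (oneCoboundaries ρM)).comp c).ker ≤
      Nat.card (Submodule.torsionBy ℤ (invariants ρQ) n) := by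
  have hcob : ∀ z : ((QuotientAddGroup.mk' (oneCoboundaries ρM)).comp c).ker,
      ∃ m : M, ∀ g, (c z : G → M) g = (ρM g).toAdd m - m := fun z =>
    (QuotientAddGroup.eq_zero_iff _).mp z.2
  choose m hm using hcob
  have htor : ∀ z g, n • ((ρM g).toAdd (m z) - m z) = 0 := fun z g => by
    rw [← hm z g, ← Pi.smul_apply n (c z : G → M), ← AddSubgroup.coe_zsmul, ← map_zsmul, hn,
      map_zero, AddSubgroup.coe_zero, Pi.zero_apply]
  refine Nat.card_le_card_of_injective
    (fun z => ⟨⟨π (m z), map_mem_invariants_of_sub_mem_invariants hπequiv hπker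
      fun g => hm z g ▸ hcinv z g⟩,
      Subtype.ext (zsmul_map_eq_zero_of_zsmul_sub_eq_zero hπker (htor z))⟩) fun z z' h => ?_
  have hmm : m z - m z' ∈ invariants ρM := by
    rw [← hπker, AddMonoidHom.mem_ker, map_sub, sub_eq_zero]
    exact congrArg Subtype.val (congrArg Subtype.val h)
  refine Subtype.ext (hc (Subtype.ext (funext fun g => ?_)))
  rw [hm, hm, sub_eq_sub_iff_sub_eq_sub, ← map_sub, hmm g]

end GroupCohomology

theorem card_H1_pk_torsion_lower_bound_general
    (p k : ℕ) (hp : p.Prime) (hk : 1 ≤ k)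
    (G : Type*) [Group G]
    (M : Type*) [AddCommGroup M] (ρM : G →* Multiplicative (AddAut M))
    (hM : CofinitelyGenerated p M)
    -- the quotient `G`-module `Q = M / M^G`
    (Q : Type*) [AddCommGroup Q] (ρQ : G →* Multiplicative (AddAut Q))
    (π : M →+ Q)
    (hπequiv : ∀ (g : G) (x : M), π ((ρM g).toAdd x) = (ρQ g).toAdd (π x))
    (hπker : π.ker = invariants ρM)
    -- finiteness hypotheses
    (hfin1 : Finite (Submodule.torsionBy ℤ (H1 ρM) ((p : ℤ) ^ k)))
    (hfin2 : Finite (Submodule.torsionBy ℤ (invariants ρQ) ((p : ℤ) ^ k))) :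
    Nat.card (H1 (1 : G →* Multiplicative (AddAut (ZMod (p ^ k))))) ^
        (rp p (pPowMul p (k - 1) (invariants ρM))) ≤
      Nat.card (Submodule.torsionBy ℤ (H1 ρM) ((p : ℤ) ^ k)) *
        Nat.card (Submodule.torsionBy ℤ (invariants ρQ) ((p : ℤ) ^ k)) := by
  have := hM.2
  have : Finite (Submodule.torsionBy ℤ (invariants ρM) p) :=
    finite_torsionBy_of_injective (f := (invariants ρM).subtype) Subtype.val_injective _
  obtain ⟨ι, hι⟩ := exists_injective_pi_zmod_prime_pow hp hk (N := invariants ρM)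
  let c := oneCocyclesPiMap ρM ((invariants ρM).subtype.comp ι) fun a => (ι a).2
  have hn : ∀ f : Fin (rp p (pPowMul p (k - 1) (invariants ρM))) →
      oneCocycles (1 : G →* Multiplicative (AddAut (ZMod (p ^ k)))), ((p : ℤ) ^ k) • f = 0 :=
    fun f => funext fun i => Subtype.ext <| funext fun g => by
      change ((p : ℤ) ^ k) • (f i : G → ZMod (p ^ k)) g = 0
      rw [zsmul_eq_mul]; norm_cast; simp
  let Φ := (QuotientAddGroup.mk' (oneCoboundaries ρM)).comp c
  have hΦ : Φ.range ≤ (Submodule.torsionBy ℤ (H1 ρM) ((p : ℤ) ^ k)).toAddSubgroup := by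
    rintro _ ⟨f, rfl⟩
    rw [Submodule.mem_toAddSubgroup, Submodule.mem_torsionBy_iff, ← map_zsmul, hn, map_zero]
  calc _ = Nat.card (Fin (rp p (pPowMul p (k - 1) (invariants ρM))) →
        oneCocycles (1 : G →* Multiplicative (AddAut (ZMod (p ^ k))))) := by
        rw [Nat.card_fun, card_H1_one, Nat.card_fin]
    _ ≤ _ := card_le_card_mul_card_ker Φ (S := (Submodule.torsionBy ℤ (H1 ρM) _).toAddSubgroup) hΦ
    _ ≤ _ := Nat.mul_le_mul_left _ <| card_ker_le_card_torsionBy_invariants hπequiv hπker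
        (oneCocyclesPiMap_injective ρM _ (Subtype.val_injective.comp hι)) (fun _ _ => (ι _).2) hn

theorem card_H1_pk_torsion_lower_bound
    (p k : ℕ) (hp : p.Prime) (hk : 1 ≤ k)
    (G : Type*) [Group G]
    (M : Type*) [AddCommGroup M] (ρM : G →* Multiplicative (AddAut M))
    (hM : CofinitelyGenerated p M)
    -- the quotient `G`-module `Q = M / M^G`
    (Q : Type*) [AddCommGroup Q] (ρQ : G →* Multiplicative (AddAut Q))
    (π : M →+ Q) (hπsurj : Function.Surjective π)
    (hπequiv : ∀ (g : G) (x : M), π ((ρM g).toAdd x) = (ρQ g).toAdd (π x))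
    (hπker : π.ker = invariants ρM)
    -- finiteness hypotheses
    (hfin : Finite (H1 (1 : G →* Multiplicative (AddAut (ZMod (p ^ k))))))
    (hfin1 : Finite (Submodule.torsionBy ℤ (H1 ρM) ((p : ℤ) ^ k)))
    (hfin2 : Finite (Submodule.torsionBy ℤ (invariants ρQ) ((p : ℤ) ^ k))) :
    Nat.card (H1 (1 : G →* Multiplicative (AddAut (ZMod (p ^ k))))) ^
        (rp p (pPowMul p (k - 1) (invariants ρM))) ≤
      Nat.card (Submodule.torsionBy ℤ (H1 ρM) ((p : ℤ) ^ k)) *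
        Nat.card (Submodule.torsionBy ℤ (invariants ρQ) ((p : ℤ) ^ k)) :=
  card_H1_pk_torsion_lower_bound_general p k hp hk G M ρM hM Q ρQ π hπequiv hπker hfin1 hfin2
end

section
/- Let p be a prime and s ≥ 1. In Λ = ℤ_p[[X]] set ω_n = (1+X)^{p^n} − 1 for n ≥ 0, and let ν_n ∈ Λ be the unique power series with X·ν_n = ω_n. Let V = Λ/(X^s). Then V is a free ℤ_p-module of rank s, the quotient V/ν_n·V is finite for every n, and there exists N such that for all n ≥ N the Λ-submodule of V generated by the image of ν_{n+1} equals p times the Λ-submodule generated by the image of ν_n, i.e. ν_{n+1}·V = p·ν_n·V. -/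
/-- The Iwasawa algebra `Λ = ℤ_p[[X]]`. -/
abbrev Lam1 (p : ℕ) [Fact p.Prime] := PowerSeries ℤ_[p]

/-- The module `V = Λ/(X^s)`. -/
abbrev Vmod (p : ℕ) [Fact p.Prime] (s : ℕ) :=
  Lam1 p ⧸ Ideal.span {(PowerSeries.X : Lam1 p) ^ s}

/-! `Λ/(X^s)` is `ℤ_p[X]/(X^s)` (Weierstrass division by the distinguished polynomial `X^s`), hence
free of rank `s`. Since `ν_n ≡ p^n` modulo `X` and `X` is nilpotent in `V`, `ν_n` divides `p^{ns}`
in `V`, so `V/ν_nV` is a quotient of the finite module `V/p^{ns}V`.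

For periodicity write `ν_{n+1} = ν_n · (1 + y + ⋯ + y^{p-1})` with `y = (1+X)^{p^n}`. Frobenius
modulo `p` gives `(1+X)^{p^s} ≡ 1 + X^{p^s} = 1 (mod p)` in `V`, and each further `p`-th power
gains a factor `p`, so `y ≡ 1 (mod p²)` once `n > s`. Then `1 + y + ⋯ + y^{p-1} = p(1 + pc)`, and
`1 + pc` is a unit because `Λ` is local. -/

open Finset

section CommRing

variable {R : Type*} [CommRing R]

theorem sub_one_dvd_geom_sum_sub_natCast (y : R) (m : ℕ) :
    y - 1 ∣ ∑ i ∈ range m, y ^ i - m := by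
  have : ∑ i ∈ range m, y ^ i - m = ∑ i ∈ range m, (y ^ i - 1) := by simp [sum_sub_distrib]
  exact this ▸ dvd_sum fun i _ => sub_one_dvd_pow_sub_one y i

theorem exists_geom_sum_eq_mul_one_add {p : ℕ} {y : R} (hy : (p : R) ^ 2 ∣ y - 1) :
    ∃ c, ∑ i ∈ range p, y ^ i = p * (1 + p * c) := by
  obtain ⟨c, hc⟩ := hy.trans (sub_one_dvd_geom_sum_sub_natCast y p)
  exact ⟨c, by linear_combination hc⟩

theorem add_dvd_pow_of_pow_eq_zero {a e : R} {s : ℕ} (he : e ^ s = 0) : a + e ∣ a ^ s := by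
  have h := sub_dvd_pow_sub_pow a (-e) s
  rwa [sub_neg_eq_add, neg_pow, he, mul_zero, sub_zero] at h

theorem sq_dvd_one_add_pow_prime_pow_sub_one {p : ℕ} (hp : p.Prime) {x : R} {s n : ℕ}
    (hx : x ^ s = 0) (hn : s < n) : (p : R) ^ 2 ∣ (1 + x) ^ p ^ n - 1 := by
  have hfrob : (p : R) ∣ (1 + x) ^ p ^ s - 1 := by
    obtain ⟨r, hr⟩ := exists_add_pow_prime_pow_eq hp (1 : R) x s
    have : x ^ p ^ s = 0 := pow_eq_zero_of_le (Nat.lt_pow_self hp.one_lt).le hx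
    exact ⟨x * r, by rw [hr, this]; ring⟩
  have hlift := dvd_sub_pow_of_dvd_sub hfrob (n - s)
  rw [one_pow, ← pow_mul, ← pow_add, Nat.add_sub_cancel' hn.le] at hlift
  exact (pow_dvd_pow _ (by omega)).trans hlift

theorem Ideal.span_singleton_smul_top_eq_of_mk_eq_mul_unit {I : Ideal R} {a b : R}
    {u : R ⧸ I} (hu : IsUnit u) (h : Ideal.Quotient.mk I a = Ideal.Quotient.mk I b * u) :
    Ideal.span {a} • (⊤ : Submodule R (R ⧸ I)) = Ideal.span {b} • ⊤ := by
  simp only [Ideal.smul_top_eq_map, Ideal.map_span, Set.image_singleton,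
    Ideal.Quotient.algebraMap_eq, h, Ideal.span_singleton_mul_right_unit hu]

end CommRing

namespace PowerSeries

variable {R : Type*} [CommRing R]

theorem eq_geom_sum_of_X_mul_eq {f : R⟦X⟧} {m : ℕ} (hf : X * f = (1 + X) ^ m - 1) :
    f = ∑ i ∈ range m, (1 + X) ^ i :=
  X_mul_cancel (by rw [hf, ← mul_geom_sum, add_sub_cancel_left])

theorem X_dvd_sub_natCast_of_X_mul_eq {f : R⟦X⟧} {m : ℕ} (hf : X * f = (1 + X) ^ m - 1) :
    X ∣ f - (m : R⟦X⟧) := by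
  have h := sub_one_dvd_geom_sum_sub_natCast (1 + X : R⟦X⟧) m
  rwa [add_sub_cancel_left, ← eq_geom_sum_of_X_mul_eq hf] at h

theorem eq_mul_geom_sum_of_X_mul_eq {f g : R⟦X⟧} {m k : ℕ} (hf : X * f = (1 + X) ^ m - 1)
    (hg : X * g = (1 + X) ^ (m * k) - 1) : g = f * ∑ i ∈ range k, ((1 + X) ^ m) ^ i :=
  X_mul_cancel (by rw [hg, pow_mul, ← geom_sum_mul, ← hf]; ring)

variable (R) in
noncomputable def quotientSpanXPowAlgEquiv (s : ℕ) :
    AdjoinRoot (Polynomial.X ^ s : Polynomial R) ≃ₐ[R] R⟦X⟧ ⧸ Ideal.span {(X ^ s : R⟦X⟧)} :=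
  have hX : (Polynomial.X ^ s : Polynomial R).IsDistinguishedAt ⊥ :=
    ⟨⟨fun hn => by
      simp [Polynomial.coeff_X_pow, (hn.trans_le (Polynomial.natDegree_X_pow_le s)).ne]⟩,
      Polynomial.monic_X_pow s⟩
  hX.algEquivQuotient.trans (Ideal.quotientEquivAlgOfEq R (by simp))

instance (s : ℕ) : Module.Free R (R⟦X⟧ ⧸ Ideal.span {(X ^ s : R⟦X⟧)}) :=
  have := (Polynomial.monic_X_pow (R := R) s).free_adjoinRoot
  .of_equiv (quotientSpanXPowAlgEquiv R s).toLinearEquiv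

instance (s : ℕ) : Module.Finite R (R⟦X⟧ ⧸ Ideal.span {(X ^ s : R⟦X⟧)}) :=
  have := (Polynomial.monic_X_pow (R := R) s).finite_adjoinRoot
  .equiv (quotientSpanXPowAlgEquiv R s).toLinearEquiv

theorem finrank_quotient_span_X_pow [Nontrivial R] (s : ℕ) :
    Module.finrank R (R⟦X⟧ ⧸ Ideal.span {(X ^ s : R⟦X⟧)}) = s := by
  rw [← (quotientSpanXPowAlgEquiv R s).toLinearEquiv.finrank_eq,
    (AdjoinRoot.powerBasis' (Polynomial.monic_X_pow s)).finrank, AdjoinRoot.powerBasis'_dim,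
    Polynomial.natDegree_X_pow]

theorem mk_dvd_natCast_pow_of_X_dvd_sub {f : R⟦X⟧} {m : ℕ} (s : ℕ)
    (h : X ∣ f - (m : R⟦X⟧)) :
    Ideal.Quotient.mk (Ideal.span {(X ^ s : R⟦X⟧)}) f ∣
      (m : R⟦X⟧ ⧸ Ideal.span {(X ^ s : R⟦X⟧)}) ^ s := by
  obtain ⟨g, hg⟩ := h
  set mk := Ideal.Quotient.mk (Ideal.span {(X ^ s : R⟦X⟧)})
  have hf : mk f = m + mk X * mk g := by
    rw [← map_natCast mk, ← map_mul, ← map_add, ← hg, add_sub_cancel]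
  rw [hf]
  apply add_dvd_pow_of_pow_eq_zero
  rw [mul_pow, ← map_pow, Ideal.Quotient.eq_zero_iff_mem.2 (Ideal.mem_span_singleton_self _),
    zero_mul]

theorem exists_mk_eq_mk_natCast_mul_mul_one_add {p : ℕ} (hp : p.Prime) {s n : ℕ} (hn : s < n)
    {f g : R⟦X⟧} (hf : X * f = (1 + X) ^ p ^ n - 1) (hg : X * g = (1 + X) ^ p ^ (n + 1) - 1) :
    ∃ c : R⟦X⟧ ⧸ Ideal.span {(X ^ s : R⟦X⟧)},
      Ideal.Quotient.mk (Ideal.span {(X ^ s : R⟦X⟧)}) g =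
        Ideal.Quotient.mk _ ((p : R⟦X⟧) * f) * (1 + (p : R⟦X⟧ ⧸ _) * c) := by
  set mk := Ideal.Quotient.mk (Ideal.span {(X ^ s : R⟦X⟧)})
  have hXs : mk X ^ s = 0 := by
    rw [← map_pow, Ideal.Quotient.eq_zero_iff_mem]
    exact Ideal.mem_span_singleton_self _
  have hy : (p : R⟦X⟧ ⧸ _) ^ 2 ∣ mk ((1 + X) ^ p ^ n) - 1 := by
    simpa using sq_dvd_one_add_pow_prime_pow_sub_one hp hXs hn
  obtain ⟨c, hc⟩ := exists_geom_sum_eq_mul_one_add hy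
  refine ⟨c, ?_⟩
  have hg' : X * g = (1 + X) ^ (p ^ n * p) - 1 := by rwa [← pow_succ]
  rw [eq_mul_geom_sum_of_X_mul_eq hf hg', map_mul, map_mul, RingHom.map_geom_sum, hc,
    map_natCast]
  ring

end PowerSeries

theorem IsLocalRing.isUnit_one_add_mul_of_not_isUnit {A : Type*} [CommRing A] [IsLocalRing A]
    {a : A} (ha : ¬IsUnit a) (b : A) : IsUnit (1 + a * b) := by
  have : a ∈ Ideal.jacobson ⊥ := by
    rwa [IsLocalRing.jacobson_eq_maximalIdeal ⊥ bot_ne_top, IsLocalRing.mem_maximalIdeal]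
  simpa [add_comm] using Ideal.mem_jacobson_bot.mp this b

theorem finite_quotient_of_algebraMap_mem {R S : Type*} [CommRing R] [CommRing S] [Algebra R S]
    [Module.Finite R S] {J : Ideal S} {r : R} [Finite (R ⧸ Ideal.span {r})]
    (hr : algebraMap R S r ∈ J) : Finite (S ⧸ J) := by
  have : Finite (S ⧸ Ideal.span {r} • (⊤ : Submodule R S)) :=
    Submodule.finite_quotient_smul _ Module.Finite.fg_top
  have hle : Ideal.span {r} • (⊤ : Submodule R S) ≤ J.restrictScalars R := by
    simpa [Ideal.map_span] using hr
  exact .of_surjective _ ((Submodule.Quotient.restrictScalarsEquiv R J).surjective.comp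
    (Submodule.factor_surjective hle))

instance PadicInt.finite_quotient_span_p_pow (p : ℕ) [Fact p.Prime] (k : ℕ) :
    Finite (ℤ_[p] ⧸ Ideal.span {(p : ℤ_[p]) ^ k}) := by
  rw [← PadicInt.ker_toZModPow]
  exact .of_injective _ (RingHom.kerLift_injective _)

theorem nu_smul_eventually_periodic_X_general
    (p : ℕ) [Fact p.Prime] (s : ℕ)
    (ν : ℕ → Lam1 p)
    (hν : ∀ n : ℕ, (PowerSeries.X : Lam1 p) * ν n =
      (1 + PowerSeries.X) ^ (p ^ n) - 1) :
    Module.Free ℤ_[p] (Vmod p s) ∧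
      Module.finrank ℤ_[p] (Vmod p s) = s ∧
      (∀ n : ℕ,
        Finite (Vmod p s ⧸ (Ideal.span {ν n} • (⊤ : Submodule (Lam1 p) (Vmod p s))))) ∧
      ∃ N : ℕ, ∀ n ≥ N,
        Ideal.span {ν (n + 1)} • (⊤ : Submodule (Lam1 p) (Vmod p s)) =
          Ideal.span {(p : Lam1 p) * ν n} • (⊤ : Submodule (Lam1 p) (Vmod p s)) := by
  refine ⟨inferInstance, PowerSeries.finrank_quotient_span_X_pow s, fun n => ?_, s + 1,
    fun n hn => ?_⟩
  · have hdvd := PowerSeries.mk_dvd_natCast_pow_of_X_dvd_sub s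
      (PowerSeries.X_dvd_sub_natCast_of_X_mul_eq (hν n))
    have : Finite (Vmod p s ⧸ Ideal.span {Ideal.Quotient.mk _ (ν n)}) :=
      finite_quotient_of_algebraMap_mem (r := (p : ℤ_[p]) ^ (n * s))
        (Ideal.mem_span_singleton.2 (by simpa [pow_mul] using hdvd))
    rw [Ideal.smul_top_eq_map, Ideal.map_span, Set.image_singleton, Ideal.Quotient.algebraMap_eq]
    exact .of_equiv _ (Submodule.Quotient.restrictScalarsEquiv _ _).toEquiv.symm
  · obtain ⟨c, hc⟩ := PowerSeries.exists_mk_eq_mk_natCast_mul_mul_one_add Fact.out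
      (by omega : s < n) (hν n) (hν (n + 1))
    obtain ⟨τ, rfl⟩ := Ideal.Quotient.mk_surjective c
    have hp_nonunit : ¬IsUnit (p : Lam1 p) := by
      rw [PowerSeries.isUnit_iff_constantCoeff, map_natCast]
      exact PadicInt.p_nonunit
    refine Ideal.span_singleton_smul_top_eq_of_mk_eq_mul_unit
      ((IsLocalRing.isUnit_one_add_mul_of_not_isUnit hp_nonunit τ).map (Ideal.Quotient.mk _)) ?_
    simpa using hc

theorem nu_smul_eventually_periodic_X
    (p : ℕ) [Fact p.Prime] (s : ℕ) (hs : 1 ≤ s)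
    (ν : ℕ → Lam1 p)
    (hν : ∀ n : ℕ, (PowerSeries.X : Lam1 p) * ν n =
      (1 + PowerSeries.X) ^ (p ^ n) - 1) :
    Module.Free ℤ_[p] (Vmod p s) ∧
      Module.finrank ℤ_[p] (Vmod p s) = s ∧
      (∀ n : ℕ,
        Finite (Vmod p s ⧸ (Ideal.span {ν n} • (⊤ : Submodule (Lam1 p) (Vmod p s))))) ∧
      ∃ N : ℕ, ∀ n ≥ N,
        Ideal.span {ν (n + 1)} • (⊤ : Submodule (Lam1 p) (Vmod p s)) =
          Ideal.span {(p : Lam1 p) * ν n} • (⊤ : Submodule (Lam1 p) (Vmod p s)) :=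
  nu_smul_eventually_periodic_X_general p s ν hν
end

section
/- Let p be a prime, s ≥ 1 and r ≥ 1. In Λ = ℤ_p[[X]] set ω_n = (1+X)^{p^n} − 1 for n ≥ 0, for n ≥ m let ν_{n,m} ∈ Λ be the unique power series with ω_m·ν_{n,m} = ω_n, and set g = ν_{r,r−1} = ω_r/ω_{r−1}. Let V = Λ/(g^s). Then there exists N ≥ r such that for all n ≥ N the Λ-submodule of V generated by the image of ν_{n+1,r} equals p times the Λ-submodule generated by the image of ν_{n,r}, i.e. ν_{n+1,r}·V = p·ν_{n,r}·V. -/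
/-- `ω_n = (1+X)^{p^n} - 1 ∈ ℤ_p[[X]]`. -/
noncomputable def om (p : ℕ) [Fact p.Prime] (n : ℕ) : Lam1 p :=
  (1 + PowerSeries.X) ^ (p ^ n) - 1

/-!
Write `f t` for the image of `ν_{r+t,r}` in `V = Λ/(g^s)`. Since
`ω_{n+1} = ω_n (p + ω_n c)` and `ω_n = ω_{r-1} g ν_{n,r}`, the sequence satisfies
`f (t+1) = f t (p + b g f t)`, so `f t ∈ (p, g)^t`. As `g^s = 0` in `V`, this forces `p ∣ f t`
for `t > s`; writing `f t = p w`, we get `f (t+1) = p f t (1 + b g w)`, and `1 + b g w` is a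
unit because `g` is nilpotent in `V`.
-/

namespace Ideal

variable {R : Type*} [CommRing R]

theorem pow_dvd_of_mem_span_pair_pow {q x y : R} {k s : ℕ} (hx : x ^ s = 0)
    (hy : y ∈ span {q, x} ^ (k + s)) : q ^ k ∣ y := by
  rw [span_insert] at hy
  have hle := sup_pow_add_le_pow_sup_pow (I := span {q}) (J := span {x}) (n := k) (m := s)
  rw [span_singleton_pow, span_singleton_pow, hx, span_singleton_zero, sup_bot_eq] at hle
  exact mem_span_singleton.mp (hle hy)

end Ideal

section Recurrence

variable {R : Type*} [CommRing R] {q x : R} {f : ℕ → R}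

theorem mem_span_pair_pow_of_recurrence (hf0 : f 0 = 1)
    (hf : ∀ t, ∃ b, f (t + 1) = f t * (q + b * x * f t)) (t : ℕ) :
    f t ∈ Ideal.span {q, x} ^ t := by
  induction t with
  | zero => simp [hf0]
  | succ t ih =>
    obtain ⟨b, hb⟩ := hf t
    have hstep : q + b * x * f t ∈ Ideal.span {q, x} :=
      Ideal.add_mem _ (Ideal.subset_span (by simp))
        (Ideal.mul_mem_right _ _ (Ideal.mul_mem_left _ _ (Ideal.subset_span (by simp))))
    rw [hb, pow_succ]
    exact Ideal.mul_mem_mul ih hstep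

theorem associated_mul_of_recurrence {s : ℕ} (hx : x ^ s = 0) (hf0 : f 0 = 1)
    (hf : ∀ t, ∃ b, f (t + 1) = f t * (q + b * x * f t)) {t : ℕ} (ht : s < t) :
    Associated (q * f t) (f (t + 1)) := by
  have hmem := Ideal.pow_le_pow_right (show 1 + s ≤ t by omega)
    (mem_span_pair_pow_of_recurrence hf0 hf t)
  obtain ⟨w, hw⟩ := Ideal.pow_dvd_of_mem_span_pair_pow hx hmem
  obtain ⟨b, hb⟩ := hf t
  have hunit : IsUnit (1 + b * x * w) :=
    ((Commute.all _ _).isNilpotent_mul_right ((Commute.all _ _).isNilpotent_mul_left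
      ⟨s, hx⟩)).isUnit_one_add
  refine ⟨hunit.unit, ?_⟩
  rw [IsUnit.unit_spec, hb, hw]
  ring

end Recurrence

theorem exists_add_one_pow_sub_one_eq {R : Type*} [CommRing R] (y : R) (k : ℕ) :
    ∃ c, (y + 1) ^ k - 1 = y * (k + y * c) := by
  obtain ⟨c, hc⟩ : y ∣ ∑ i ∈ Finset.range k, ((y + 1) ^ i - 1) :=
    Finset.dvd_sum fun i _ => by simpa using sub_one_dvd_pow_sub_one (y + 1) i
  refine ⟨c, ?_⟩
  have hgeom := geom_sum_mul (y + 1) k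
  rw [Finset.sum_sub_distrib, Finset.sum_const, Finset.card_range, nsmul_one,
    sub_eq_iff_eq_add] at hc
  rw [← hgeom, hc, add_sub_cancel_right]
  ring

section Iwasawa

variable {p : ℕ} [Fact p.Prime]

theorem om_ne_zero (n : ℕ) : om p n ≠ 0 := by
  obtain ⟨c, hc⟩ := exists_add_one_pow_sub_one_eq (PowerSeries.X : Lam1 p) (p ^ n)
  rw [om, add_comm, hc]
  refine mul_ne_zero PowerSeries.X_ne_zero fun h => ?_
  have hpow : (p : ℤ_[p]) ^ n = 0 := by simpa using congrArg PowerSeries.constantCoeff h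
  exact pow_ne_zero n (Nat.cast_ne_zero.mpr (Fact.out : p.Prime).ne_zero) hpow

theorem exists_om_succ_eq (n : ℕ) : ∃ c, om p (n + 1) = om p n * (p + om p n * c) := by
  obtain ⟨c, hc⟩ := exists_add_one_pow_sub_one_eq (om p n) p
  refine ⟨c, ?_⟩
  rw [← hc, om, om, sub_add_cancel, ← pow_mul, ← pow_succ]

variable {ν : ℕ → ℕ → Lam1 p} (hν : ∀ n m : ℕ, m ≤ n → om p m * ν n m = om p n)
include hν

theorem nu_self (n : ℕ) : ν n n = 1 :=
  mul_left_cancel₀ (om_ne_zero n) ((hν n n le_rfl).trans (mul_one _).symm)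

theorem nu_succ_eq_mul {n r : ℕ} (h : r ≤ n) : ν (n + 1) r = ν n r * ν (n + 1) n := by
  refine mul_left_cancel₀ (om_ne_zero r) ?_
  rw [hν _ _ (by omega), ← mul_assoc, hν n r h, hν _ _ n.le_succ]

theorem exists_nu_succ_eq {r n : ℕ} (h : r ≤ n) :
    ∃ b, ν (n + 1) r = ν n r * (p + b * ν r (r - 1) * ν n r) := by
  obtain ⟨c, hc⟩ := exists_om_succ_eq (p := p) n
  have hsucc : ν (n + 1) n = p + om p n * c :=
    mul_left_cancel₀ (om_ne_zero n) ((hν _ _ n.le_succ).trans hc)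
  have hom : om p n = om p (r - 1) * ν r (r - 1) * ν n r := by
    rw [hν r (r - 1) (by omega), hν n r h]
  refine ⟨om p (r - 1) * c, ?_⟩
  rw [nu_succ_eq_mul hν h, hsucc, hom]
  ring

end Iwasawa

theorem nu_smul_eventually_periodic_cyclotomic_general
    (p : ℕ) [Fact p.Prime] (s r : ℕ)
    (ν : ℕ → ℕ → Lam1 p)
    (hν : ∀ n m : ℕ, m ≤ n → om p m * ν n m = om p n) :
    ∃ N : ℕ, r ≤ N ∧ ∀ n ≥ N,
      Ideal.span {ν (n + 1) r} •
          (⊤ : Submodule (Lam1 p) (Lam1 p ⧸ Ideal.span {(ν r (r - 1)) ^ s})) =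
        Ideal.span {(p : Lam1 p) * ν n r} •
          (⊤ : Submodule (Lam1 p) (Lam1 p ⧸ Ideal.span {(ν r (r - 1)) ^ s})) := by
  set π := Ideal.Quotient.mk (Ideal.span {(ν r (r - 1)) ^ s})
  have hg : π (ν r (r - 1)) ^ s = 0 := by
    rw [← map_pow, Ideal.Quotient.eq_zero_iff_mem]
    exact Ideal.mem_span_singleton_self _
  have hf : ∀ t, ∃ b, π (ν (r + t + 1) r) =
      π (ν (r + t) r) * (p + b * π (ν r (r - 1)) * π (ν (r + t) r)) := fun t => by
    obtain ⟨b, hb⟩ := exists_nu_succ_eq hν (Nat.le_add_right r t)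
    exact ⟨π b, by rw [hb]; simp⟩
  refine ⟨r + s + 1, by omega, fun n hn => ?_⟩
  obtain ⟨t, rfl⟩ := Nat.exists_eq_add_of_le (show r ≤ n by omega)
  obtain ⟨u, hu⟩ : Associated (p * π (ν (r + t) r)) (π (ν (r + t + 1) r)) :=
    associated_mul_of_recurrence (f := fun t => π (ν (r + t) r)) hg (by simp [nu_self hν]) hf
      (by omega)
  rw [Ideal.smul_top_eq_map, Ideal.smul_top_eq_map, Ideal.map_span, Ideal.map_span,
    Set.image_singleton, Set.image_singleton, Ideal.Quotient.algebraMap_eq, map_mul, map_natCast,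
    ← hu]
  exact congrArg _ (Ideal.span_singleton_mul_right_unit u.isUnit _)

theorem nu_smul_eventually_periodic_cyclotomic
    (p : ℕ) [Fact p.Prime] (s r : ℕ) (hs : 1 ≤ s) (hr : 1 ≤ r)
    (ν : ℕ → ℕ → Lam1 p)
    (hν : ∀ n m : ℕ, m ≤ n → om p m * ν n m = om p n) :
    ∃ N : ℕ, r ≤ N ∧ ∀ n ≥ N,
      Ideal.span {ν (n + 1) r} •
          (⊤ : Submodule (Lam1 p) (Lam1 p ⧸ Ideal.span {(ν r (r - 1)) ^ s})) =
        Ideal.span {(p : Lam1 p) * ν n r} •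
          (⊤ : Submodule (Lam1 p) (Lam1 p ⧸ Ideal.span {(ν r (r - 1)) ^ s})) :=
  nu_smul_eventually_periodic_cyclotomic_general p s r ν hν
end

section
/- Let p be a prime and s ≥ 1. In Λ = ℤ_p[[X]] set ω_n = (1+X)^{p^n} − 1 and let ν_n ∈ Λ be the unique power series with X·ν_n = ω_n. For n ≥ 0 let R_n = Λ/(X^s, ν_n). Then each R_n is a finite ring of p-power order, and there exist a constant c ∈ ℕ and an N such that for all n ≥ N the exponent of the additive group of R_n equals p^{n+c}. -/
/-- The finite ring `R_n = Λ/(X^s, ν_n)`. -/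
abbrev Rn (p : ℕ) [Fact p.Prime] (s : ℕ) (ν : ℕ → Lam1 p) (n : ℕ) :=
  Lam1 p ⧸ Ideal.span {(PowerSeries.X : Lam1 p) ^ s, ν n}

open PowerSeries

theorem add_one_pow_sub_one_eq_mul_sum {R : Type*} [CommRing R] (x : R) (N : ℕ) :
    (x + 1) ^ N - 1 = x * ∑ j ∈ Finset.range N, (N.choose (j + 1) : R) * x ^ j := by
  rw [add_pow, Finset.sum_range_succ', Finset.mul_sum]
  simp only [one_pow, mul_one, pow_zero, Nat.choose_zero_right, Nat.cast_one,
    add_sub_cancel_right]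
  refine Finset.sum_congr rfl fun j _ => ?_
  ring

theorem Ideal.span_pair_mul_add_mul_eq {A : Type*} [CommRing A] {x y t u w : A} (hu : IsUnit u) :
    Ideal.span {x, y * (t * u + x * w)} = Ideal.span {x, t * y} := by
  obtain ⟨v, rfl⟩ := hu
  apply le_antisymm <;>
    rw [Ideal.span_le, Set.insert_subset_iff, Set.singleton_subset_iff] <;>
    refine ⟨Ideal.subset_span (by simp), ?_⟩ <;>
    rw [SetLike.mem_coe, Ideal.mem_span_pair]
  · exact ⟨y * w, v, by ring⟩
  · exact ⟨-(y * w * ↑v⁻¹), ↑v⁻¹, by linear_combination (t * y) * v.inv_mul⟩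

theorem Ideal.mul_mem_span_pair_mul_iff {A : Type*} [CommRing A] {x y t z : A}
    (ht : ∀ a, x ∣ t * a → x ∣ a) : t * z ∈ Ideal.span {x, t * y} ↔ z ∈ Ideal.span {x, y} := by
  simp only [Ideal.mem_span_pair]
  constructor
  · rintro ⟨a, b, h⟩
    obtain ⟨c, hc⟩ := ht (z - b * y) ⟨a, by linear_combination -h⟩
    exact ⟨c, b, by linear_combination -hc⟩
  · rintro ⟨a, b, h⟩
    exact ⟨t * a, b, by linear_combination t * h⟩

theorem pow_mem_span_pow_add_mul {A : Type*} [CommRing A] (t x r : A) (s : ℕ) :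
    t ^ s ∈ Ideal.span {x ^ s, t + x * r} := by
  obtain ⟨c, hc⟩ := sub_dvd_pow_sub_pow t (-(x * r)) s
  rw [Ideal.mem_span_pair]
  exact ⟨(-r) ^ s, c, by rw [sub_neg_eq_add] at hc; linear_combination -hc⟩

theorem PowerSeries.X_pow_dvd_of_X_pow_dvd_C_mul {R : Type*} [Semiring R] [NoZeroDivisors R]
    {r : R} (hr : r ≠ 0) {s : ℕ} {f : R⟦X⟧} (h : X ^ s ∣ C r * f) : X ^ s ∣ f := by
  rw [X_pow_dvd_iff] at h ⊢
  intro m hm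
  simpa [coeff_C_mul, hr] using h m hm

theorem PowerSeries.constantCoeff_eq_of_X_mul_eq {R : Type*} [CommRing R] {g : R⟦X⟧} {N : ℕ}
    (hg : X * g = (1 + X) ^ N - 1) : constantCoeff g = N := by
  have h := congrArg (coeff 1) hg
  have hpoly : ((1 + X) ^ N : R⟦X⟧) = (((1 + Polynomial.X) ^ N : Polynomial R) : R⟦X⟧) := by
    push_cast; rfl
  rw [coeff_succ_X_mul, hpoly, map_sub, Polynomial.coeff_coe, Polynomial.coeff_one_add_X_pow] at h
  simpa [coeff_one] using h

theorem PowerSeries.mk_eq_sum_of_X_pow_mem {R : Type*} [CommRing R] {I : Ideal R⟦X⟧} {s : ℕ}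
    (hX : X ^ s ∈ I) (f : R⟦X⟧) :
    Ideal.Quotient.mk I f =
      ∑ i ∈ Finset.range s, Ideal.Quotient.mk I (C (coeff i f)) * Ideal.Quotient.mk I X ^ i := by
  conv_lhs => rw [eq_X_pow_mul_shift_add_trunc s f]
  rw [map_add, Ideal.Quotient.eq_zero_iff_mem.2 (I.mul_mem_right _ hX), zero_add,
    ← Polynomial.eval₂_C_X_eq_coe, Polynomial.hom_eval₂, eval₂_trunc_eq_sum_range]
  rfl

theorem exists_card_eq_prime_pow_of_nsmul_eq_zero {M : Type*} [AddCommGroup M] [Finite M]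
    {p E : ℕ} (hp : p.Prime) (h : ∀ x : M, p ^ E • x = 0) : ∃ k, Nat.card M = p ^ k := by
  have hdvd := card_dvd_exponent_nsmul_rank' M h
  rw [← pow_mul] at hdvd
  obtain ⟨k, -, hk⟩ := (Nat.dvd_prime_pow hp).1 hdvd
  exact ⟨k, hk⟩

theorem Ideal.Quotient.natCast_eq_zero_iff {A : Type*} [CommRing A] {I : Ideal A} {n : ℕ} :
    (n : A ⧸ I) = 0 ↔ (n : A) ∈ I := by
  rw [← map_natCast (Ideal.Quotient.mk I), Ideal.Quotient.eq_zero_iff_mem]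

theorem Ideal.Quotient.nsmul_eq_zero_of_natCast_mem {A : Type*} [CommRing A] {I : Ideal A} {n : ℕ}
    (h : (n : A) ∈ I) (x : A ⧸ I) : n • x = 0 := by
  rw [nsmul_eq_mul, natCast_eq_zero_iff.2 h, zero_mul]

theorem exponent_quotient_eq_prime_pow {A : Type*} [CommRing A] {I : Ideal A} {p k : ℕ}
    (hp : p.Prime) (hk : IsLeast {j | (p : A) ^ j ∈ I} k) :
    AddMonoid.exponent (A ⧸ I) = p ^ k := by
  have hmem : ∀ j, (p : A) ^ j ∈ I ↔ ((p ^ j : ℕ) : A ⧸ I) = 0 := fun j => by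
    rw [Ideal.Quotient.natCast_eq_zero_iff, Nat.cast_pow]
  obtain ⟨t, htk, ht⟩ := (Nat.dvd_prime_pow hp).1 <| AddMonoid.exponent_dvd_of_forall_nsmul_eq_zero
    (Ideal.Quotient.nsmul_eq_zero_of_natCast_mem (I := I) (by rw [Nat.cast_pow]; exact hk.1))
  have htI : (p : A) ^ t ∈ I := by
    rw [hmem, ← ht, ← nsmul_one]
    exact AddMonoid.exponent_nsmul_eq_zero 1
  rw [ht, le_antisymm htk (hk.2 htI)]

theorem PowerSeries.exists_sum_choose_mul_pow_eq {R : Type*} [CommRing R] (N : ℕ) (hN : N ≠ 0)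
    (s : ℕ) {a : R⟦X⟧} (ha : constantCoeff a = 0) (b : R⟦X⟧) :
    ∃ u w : R⟦X⟧, IsUnit u ∧
      ∑ j ∈ Finset.range N, (N.choose (j + 1) : R⟦X⟧) * ((N : R⟦X⟧) * a + X ^ s * b) ^ j =
        (N : R⟦X⟧) * u + X ^ s * w := by
  set S : R⟦X⟧ → R⟦X⟧ := fun x => ∑ j ∈ Finset.range N, (N.choose (j + 1) : R⟦X⟧) * x ^ j
  set t : R⟦X⟧ := (N : R⟦X⟧)
  obtain ⟨M, hM⟩ := Nat.exists_eq_succ_of_ne_zero hN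
  set r := ∑ j ∈ Finset.range M, ((N.choose (j + 2) : R⟦X⟧) * (t * a) ^ j * a)
  have hS : S (t * a) = t * (1 + r) := by
    simp only [S, r]
    rw [hM, Finset.sum_range_succ', ← hM, mul_add, mul_one, add_comm, Finset.mul_sum]
    congr 1
    · simp [t]
    · exact Finset.sum_congr rfl fun j _ => by ring
  have hdvd : X ^ s ∣ S (t * a + X ^ s * b) - S (t * a) := by
    simp only [S, ← Finset.sum_sub_distrib, ← mul_sub]
    refine Finset.dvd_sum fun j _ => Dvd.dvd.mul_left ?_ _
    have := sub_dvd_pow_sub_pow (t * a + X ^ s * b) (t * a) j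
    rw [add_sub_cancel_left] at this
    exact (dvd_mul_right _ b).trans this
  obtain ⟨w, hw⟩ := hdvd
  refine ⟨1 + r, w, ?_, by linear_combination hw + hS⟩
  rw [isUnit_iff_constantCoeff]
  simp [r, ha]

namespace PadicInt

variable {p : ℕ} [Fact p.Prime]

theorem toZModPow_val_sub_mem (n : ℕ) (x : ℤ_[p]) :
    ((toZModPow n x).val : ℤ_[p]) - x ∈ Ideal.span {(p : ℤ_[p]) ^ n} := by
  rw [← ker_toZModPow, RingHom.mem_ker, map_sub, map_natCast, ZMod.natCast_zmod_val, sub_self]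

theorem finite_quotient_of_X_pow_mem_of_pow_mem {I : Ideal ℤ_[p]⟦X⟧} {s E : ℕ} (hX : X ^ s ∈ I)
    (hp : (p : ℤ_[p]⟦X⟧) ^ E ∈ I) : Finite (ℤ_[p]⟦X⟧ ⧸ I) := by
  have hC : ∀ c : ℤ_[p], Ideal.Quotient.mk I (C ((toZModPow E c).val : ℤ_[p])) =
      Ideal.Quotient.mk I (C c) := fun c => by
    obtain ⟨d, hd⟩ := Ideal.mem_span_singleton.1 (toZModPow_val_sub_mem E c)
    rw [Ideal.Quotient.eq, ← map_sub, hd, map_mul, map_pow, map_natCast]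
    exact I.mul_mem_right _ hp
  refine Finite.of_surjective (fun v : Fin s → ZMod (p ^ E) =>
    ∑ i, Ideal.Quotient.mk I (C ((v i).val : ℤ_[p])) * Ideal.Quotient.mk I X ^ (i : ℕ)) fun x => ?_
  obtain ⟨f, rfl⟩ := Ideal.Quotient.mk_surjective x
  refine ⟨fun i => toZModPow E (coeff i f), ?_⟩
  simp only [hC]
  rw [Fin.sum_univ_eq_sum_range (fun i => Ideal.Quotient.mk I (C (coeff i f)) *
    Ideal.Quotient.mk I X ^ i)]
  exact (mk_eq_sum_of_X_pow_mem hX f).symm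

theorem exists_one_add_X_pow_sub_one_eq (n : ℕ) :
    ∃ a : ℤ_[p]⟦X⟧, constantCoeff a = 0 ∧
      (1 + X : ℤ_[p]⟦X⟧) ^ (p ^ n) - 1 = (p : ℤ_[p]⟦X⟧) * a + X ^ (p ^ n) := by
  have hp : p.Prime := Fact.out
  have hpn : 0 ≠ p ^ n := (pow_pos hp.pos n).ne
  obtain ⟨g, hg⟩ : Polynomial.C (p : ℤ_[p]) ∣
      (1 + Polynomial.X) ^ (p ^ n) - 1 - Polynomial.X ^ (p ^ n) := by
    refine (Polynomial.C_dvd_iff_dvd_coeff _ _).2 fun i => ?_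
    simp only [Polynomial.coeff_sub, Polynomial.coeff_one_add_X_pow, Polynomial.coeff_one,
      Polynomial.coeff_X_pow]
    rcases eq_or_ne i 0 with rfl | hi0
    · simp [hpn]
    rcases eq_or_ne i (p ^ n) with rfl | hin
    · simp [hp.ne_zero]
    simpa [hi0, hin] using Nat.cast_dvd_cast (hp.dvd_choose_pow hi0 hin)
  refine ⟨g, ?_, ?_⟩
  · have h0 := congrArg (Polynomial.coeff · 0) hg
    simp [hpn, hp.ne_zero, Polynomial.coeff_one_add_X_pow] at h0
    simpa using h0
  · have := congrArg (fun q : Polynomial ℤ_[p] => (q : ℤ_[p]⟦X⟧)) hg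
    simp only [Polynomial.coe_sub, Polynomial.coe_pow, Polynomial.coe_add, Polynomial.coe_one,
      Polynomial.coe_X, Polynomial.coe_mul, Polynomial.coe_C] at this
    rw [map_natCast] at this
    linear_combination this

end PadicInt

section Nu

variable {p : ℕ} [Fact p.Prime] {s : ℕ} {ν : ℕ → Lam1 p}

theorem constantCoeff_nu (hν : ∀ n : ℕ, (X : Lam1 p) * ν n = (1 + X) ^ (p ^ n) - 1) (n : ℕ) :
    constantCoeff (ν n) = (p : ℤ_[p]) ^ n := by
  rw [constantCoeff_eq_of_X_mul_eq (hν n), Nat.cast_pow]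

theorem pow_mul_mem_span_nu (hν : ∀ n : ℕ, (X : Lam1 p) * ν n = (1 + X) ^ (p ^ n) - 1)
    (s n : ℕ) : (p : Lam1 p) ^ (n * s) ∈ Ideal.span {X ^ s, ν n} := by
  rw [eq_X_mul_shift_add_const (ν n), constantCoeff_nu hν, map_pow, map_natCast, add_comm,
    pow_mul]
  exact pow_mem_span_pow_add_mul _ _ _ s

theorem le_of_pow_mem_span_nu (hs : 1 ≤ s)
    (hν : ∀ n : ℕ, (X : Lam1 p) * ν n = (1 + X) ^ (p ^ n) - 1) {n e : ℕ}
    (h : (p : Lam1 p) ^ e ∈ Ideal.span {X ^ s, ν n}) : n ≤ e := by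
  obtain ⟨a, b, hab⟩ := Ideal.mem_span_pair.1 h
  have h0 := congrArg constantCoeff hab
  simp only [map_add, map_mul, map_pow, constantCoeff_X, zero_pow (by omega : s ≠ 0), mul_zero,
    zero_add, constantCoeff_nu hν, map_natCast] at h0
  exact (pow_dvd_pow_iff PadicInt.prime_p.ne_zero PadicInt.prime_p.not_isUnit).1
    ⟨constantCoeff b, by rw [← h0, mul_comm]⟩

theorem nu_succ (hν : ∀ n : ℕ, (X : Lam1 p) * ν n = (1 + X) ^ (p ^ n) - 1) (n : ℕ) :
    ν (n + 1) = ν n * ∑ j ∈ Finset.range p, (p.choose (j + 1) : Lam1 p) * (X * ν n) ^ j := by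
  refine mul_left_cancel₀ (X_ne_zero (R := ℤ_[p])) ?_
  rw [hν (n + 1), pow_succ, pow_mul, ← mul_assoc, ← add_one_pow_sub_one_eq_mul_sum, hν n,
    sub_add_cancel]

theorem span_nu_succ (hν : ∀ n : ℕ, (X : Lam1 p) * ν n = (1 + X) ^ (p ^ n) - 1) {n : ℕ}
    (hsn : s ≤ p ^ n) : Ideal.span {X ^ s, ν (n + 1)} = Ideal.span {X ^ s, (p : Lam1 p) * ν n} := by
  obtain ⟨a, ha0, ha⟩ := PadicInt.exists_one_add_X_pow_sub_one_eq (p := p) n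
  have hX : X * ν n = (p : Lam1 p) * a + X ^ s * X ^ (p ^ n - s) := by
    rw [hν, ha, ← pow_add, Nat.add_sub_cancel' hsn]
  obtain ⟨u, w, hu, huw⟩ :=
    exists_sum_choose_mul_pow_eq p (Fact.out : p.Prime).ne_zero s ha0 (X ^ (p ^ n - s))
  rw [nu_succ hν, hX, huw, Ideal.span_pair_mul_add_mul_eq hu]

theorem pow_succ_mem_span_nu_succ_iff
    (hν : ∀ n : ℕ, (X : Lam1 p) * ν n = (1 + X) ^ (p ^ n) - 1) {n e : ℕ} (hsn : s ≤ p ^ n) :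
    (p : Lam1 p) ^ (e + 1) ∈ Ideal.span {X ^ s, ν (n + 1)} ↔
      (p : Lam1 p) ^ e ∈ Ideal.span {X ^ s, ν n} := by
  rw [span_nu_succ hν hsn, pow_succ', Ideal.mul_mem_span_pair_mul_iff]
  intro a ha
  rw [← map_natCast (C (R := ℤ_[p]))] at ha
  exact X_pow_dvd_of_X_pow_dvd_C_mul PadicInt.prime_p.ne_zero ha

theorem pow_add_mem_span_nu_add_iff
    (hν : ∀ n : ℕ, (X : Lam1 p) * ν n = (1 + X) ^ (p ^ n) - 1) {n e : ℕ} (hsn : s ≤ p ^ n)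
    (m : ℕ) : (p : Lam1 p) ^ (e + m) ∈ Ideal.span {X ^ s, ν (n + m)} ↔
      (p : Lam1 p) ^ e ∈ Ideal.span {X ^ s, ν n} := by
  induction m with
  | zero => rfl
  | succ m ih =>
    have hsm : s ≤ p ^ (n + m) :=
      hsn.trans (Nat.pow_le_pow_right (Fact.out : p.Prime).pos (Nat.le_add_right n m))
    rw [← add_assoc, ← add_assoc, pow_succ_mem_span_nu_succ_iff hν hsm, ih]

theorem isLeast_pow_mem_span_nu_add (hs : 1 ≤ s)
    (hν : ∀ n : ℕ, (X : Lam1 p) * ν n = (1 + X) ^ (p ^ n) - 1) {n d : ℕ} (hsn : s ≤ p ^ n)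
    (hd : IsLeast {e | (p : Lam1 p) ^ e ∈ Ideal.span {X ^ s, ν n}} d) (m : ℕ) :
    IsLeast {e | (p : Lam1 p) ^ e ∈ Ideal.span {X ^ s, ν (n + m)}} (d + m) := by
  refine ⟨(pow_add_mem_span_nu_add_iff hν hsn m).2 hd.1, fun j hj => ?_⟩
  obtain ⟨k, rfl⟩ : ∃ k, j = k + m := ⟨j - m, by have := le_of_pow_mem_span_nu hs hν hj; omega⟩
  exact Nat.add_le_add_right (hd.2 ((pow_add_mem_span_nu_add_iff hν hsn m).1 hj)) m

end Nu

theorem exponent_Rn_eventually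
    (p : ℕ) [Fact p.Prime] (s : ℕ) (hs : 1 ≤ s)
    (ν : ℕ → Lam1 p)
    (hν : ∀ n : ℕ, (PowerSeries.X : Lam1 p) * ν n =
      (1 + PowerSeries.X) ^ (p ^ n) - 1) :
    (∀ n : ℕ, Finite (Rn p s ν n) ∧ ∃ m : ℕ, Nat.card (Rn p s ν n) = p ^ m) ∧
      ∃ c N : ℕ, ∀ n ≥ N, AddMonoid.exponent (Rn p s ν n) = p ^ (n + c) := by
  refine ⟨fun n => ?_, ?_⟩
  · have hpow := pow_mul_mem_span_nu hν s n
    have hfin := PadicInt.finite_quotient_of_X_pow_mem_of_pow_mem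
      (Ideal.subset_span (Set.mem_insert _ _)) hpow
    exact ⟨hfin, exists_card_eq_prime_pow_of_nsmul_eq_zero Fact.out
      (Ideal.Quotient.nsmul_eq_zero_of_natCast_mem (by rwa [Nat.cast_pow]))⟩
  · set S := {e | (p : Lam1 p) ^ e ∈ Ideal.span {X ^ s, ν s}}
    have hS : IsLeast S (sInf S) :=
      ⟨Nat.sInf_mem ⟨_, pow_mul_mem_span_nu hν s s⟩, fun _ => Nat.sInf_le⟩
    have hsS : s ≤ sInf S := le_of_pow_mem_span_nu hs hν hS.1
    refine ⟨sInf S - s, s, fun n hn => ?_⟩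
    obtain ⟨m, rfl⟩ := Nat.exists_eq_add_of_le hn
    rw [show s + m + (sInf S - s) = sInf S + m by omega]
    exact exponent_quotient_eq_prime_pow Fact.out
      (isLeast_pow_mem_span_nu_add hs hν (Nat.lt_pow_self (Fact.out : p.Prime).one_lt).le hS m)
end
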